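/- Define an equivalence relation on C(Σ, M) by declaring f ∼ h if and only if there exists a nonzero a ∈ ℂ with h = f ∘ g_a (this is an equivalence relation because a ↦ g_a is a group action of ℂ* by homeomorphisms of Σ). Then the quotient space C(Σ, M)/∼, equipped with the quotient topology induced by the uniform metric topology on C(Σ, M), is a Hausdorff (T₂) topological space. (The space of unparametrized continuous maps is Hausdorff.) -/

import Mathlib

open OnePoint

/-- The reparametrization `g_a : Σ → Σ` of the Riemann sphere `Σ = OnePoint ℂ`
extending `z ↦ a · z` on `ℂ` and fixing the point at infinity. -/
noncomputable def gA (a : ℂ) (ha : a ≠ 0) : C(OnePoint ℂ, OnePoint ℂ) where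
  toFun := OnePoint.map (fun z => a * z)
  continuous_toFun := (Homeomorph.onePointCongr (Homeomorph.mulLeft₀ a ha)).continuous

@[simp] lemma gA_coe (a : ℂ) (ha : a ≠ 0) (z : ℂ) :
    gA a ha (z : OnePoint ℂ) = ((a * z : ℂ) : OnePoint ℂ) := rfl

@[simp] lemma gA_infty (a : ℂ) (ha : a ≠ 0) : gA a ha ∞ = ∞ := rfl

/-- The equivalence relation on `C(Σ, M)` identifying `f` with its reparametrizations
`f ∘ g_a`, `a ∈ ℂ*`. -/
def reparamSetoid (M : Type*) [MetricSpace M] [CompactSpace M] :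
    Setoid C(OnePoint ℂ, M) where
  r f h := ∃ (a : ℂ) (ha : a ≠ 0), h = f.comp (gA a ha)
  iseqv := by
    constructor
    · intro f
      exact ⟨1, one_ne_zero, by ext x; induction x using OnePoint.rec <;> simp⟩
    · rintro f h ⟨a, ha, rfl⟩
      refine ⟨a⁻¹, inv_ne_zero ha, ?_⟩
      ext x; induction x using OnePoint.rec <;>
        simp [← mul_assoc, mul_inv_cancel₀ ha]
    · rintro f g h ⟨a, ha, rfl⟩ ⟨b, hb, rfl⟩
      refine ⟨a * b, mul_ne_zero ha hb, ?_⟩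
      ext x; induction x using OnePoint.rec <;> simp [mul_assoc]

/-!
Precomposition with each `g_a` is a homeomorphism of `C(Σ, M)`, so the quotient map is open and
it suffices to show that the relation `f ∼ h` is closed in `C(Σ, M) × C(Σ, M)`. Let `F n → f` and
`F n ∘ g_{a n} → h`. Since `∼` is symmetric and `g_a⁻¹ = g_{a⁻¹}`, we may assume `‖a n‖ ≤ 1`, and
then pass to a subsequence along which `a n → b`. Uniform convergence gives `h z = f (b z)` for
`z ∈ ℂ`. If `b ≠ 0` this says `h = f ∘ g_b`. If `b = 0` then `h` is the constant `f 0`; as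
precomposition with the surjection `g_{a n}` preserves uniform distance, `F n` converges to that
constant as well, so `f = h`.
-/

open Filter Topology Set

lemma ContinuousMap.dist_comp_of_surjective {X Y Z : Type*} [TopologicalSpace X] [CompactSpace X]
    [TopologicalSpace Y] [CompactSpace Y] [PseudoMetricSpace Z] {g : C(X, Y)}
    (hg : Function.Surjective g) (F G : C(Y, Z)) :
    dist (F.comp g) (G.comp g) = dist F G := by
  refine le_antisymm ((dist_le dist_nonneg).2 fun x => dist_apply_le_dist (g x))
    ((dist_le dist_nonneg).2 fun y => ?_)
  obtain ⟨x, rfl⟩ := hg y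
  exact dist_apply_le_dist (f := F.comp g) (g := G.comp g) x

lemma gA_comp_gA_inv (a : ℂ) (ha : a ≠ 0) :
    (gA a ha).comp (gA a⁻¹ (inv_ne_zero ha)) = ContinuousMap.id _ := by
  ext x
  induction x using OnePoint.rec <;> simp [← mul_assoc, mul_inv_cancel₀ ha]

lemma gA_surjective (a : ℂ) (ha : a ≠ 0) : Function.Surjective (gA a ha) :=
  fun x => ⟨gA a⁻¹ (inv_ne_zero ha) x, DFunLike.congr_fun (gA_comp_gA_inv a ha) x⟩

section Limits

variable {M : Type*} [TopologicalSpace M] {ι : Type*} {l : Filter ι} {F H : ι → C(OnePoint ℂ, M)}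
  {f h : C(OnePoint ℂ, M)} {a : ι → ℂ} {ha : ∀ i, a i ≠ 0} {b : ℂ}

lemma apply_coe_eq_of_tendsto [T2Space M] [l.NeBot]
    (hF : Tendsto F l (𝓝 f)) (hH : Tendsto H l (𝓝 h))
    (hFH : ∀ i, H i = (F i).comp (gA (a i) (ha i))) (hab : Tendsto a l (𝓝 b)) (z : ℂ) :
    h z = f (b * z : ℂ) := by
  have hFa : Tendsto (fun i => F i (a i * z : ℂ)) l (𝓝 (f (b * z : ℂ))) :=
    hF.eval ((OnePoint.continuous_coe.tendsto _).comp (hab.mul_const z))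
  refine tendsto_nhds_unique (hH.eval tendsto_const_nhds) ?_
  simpa only [hFH, ContinuousMap.comp_apply, gA_coe] using hFa

end Limits

section Metric

variable {M : Type*} [MetricSpace M] {ι : Type*} {l : Filter ι} [l.NeBot]
  {F H : ι → C(OnePoint ℂ, M)} {f h : C(OnePoint ℂ, M)} {a : ι → ℂ} {ha : ∀ i, a i ≠ 0}

lemma eq_comp_gA_of_tendsto (hF : Tendsto F l (𝓝 f)) (hH : Tendsto H l (𝓝 h))
    (hFH : ∀ i, H i = (F i).comp (gA (a i) (ha i))) {b : ℂ} (hb : b ≠ 0)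
    (hab : Tendsto a l (𝓝 b)) : h = f.comp (gA b hb) :=
  ContinuousMap.coe_injective <| OnePoint.denseRange_coe.equalizer h.continuous
    (f.comp _).continuous <| funext <| apply_coe_eq_of_tendsto hF hH hFH hab

lemma eq_of_tendsto_zero (hF : Tendsto F l (𝓝 f)) (hH : Tendsto H l (𝓝 h))
    (hFH : ∀ i, H i = (F i).comp (gA (a i) (ha i))) (hab : Tendsto a l (𝓝 0)) : h = f := by
  set c := ContinuousMap.const (OnePoint ℂ) (f ((0 : ℂ) : OnePoint ℂ))
  have hh : h = c := ContinuousMap.coe_injective <| OnePoint.denseRange_coe.equalizer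
    h.continuous continuous_const <| funext fun z =>
      (apply_coe_eq_of_tendsto hF hH hFH hab z).trans (by rw [zero_mul]; rfl)
  have hdist : ∀ i, dist (F i) c = dist (H i) h := fun i => by
    rw [hFH i, hh, ← ContinuousMap.dist_comp_of_surjective (gA_surjective (a i) (ha i))]
    rfl
  have hFc : Tendsto F l (𝓝 c) := tendsto_iff_dist_tendsto_zero.2 <| by
    simpa only [hdist] using tendsto_iff_dist_tendsto_zero.1 hH
  rw [hh, tendsto_nhds_unique hF hFc]

end Metric

section Quotient

variable {M : Type*} [MetricSpace M] [CompactSpace M]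

lemma reparamSetoid_of_tendsto_of_norm_le_one {F H : ℕ → C(OnePoint ℂ, M)}
    {f h : C(OnePoint ℂ, M)} {a : ℕ → ℂ} {ha : ∀ n, a n ≠ 0}
    (hF : Tendsto F atTop (𝓝 f)) (hH : Tendsto H atTop (𝓝 h))
    (hFH : ∀ n, H n = (F n).comp (gA (a n) (ha n))) (ha1 : ∀ n, ‖a n‖ ≤ 1) :
    reparamSetoid M f h := by
  obtain ⟨b, -, φ, hφ, hab⟩ :=
    (isCompact_closedBall (0 : ℂ) 1).tendsto_subseq (x := a) (by simpa using ha1)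
  have hF' := hF.comp hφ.tendsto_atTop
  have hH' := hH.comp hφ.tendsto_atTop
  rcases eq_or_ne b 0 with rfl | hb
  · exact eq_of_tendsto_zero hF' hH' (fun n => hFH (φ n)) hab ▸ (reparamSetoid M).refl f
  · exact ⟨b, hb, eq_comp_gA_of_tendsto hF' hH' (fun n => hFH (φ n)) hb hab⟩

lemma isClosed_reparamSetoid_rel :
    IsClosed {p : C(OnePoint ℂ, M) × C(OnePoint ℂ, M) | reparamSetoid M p.1 p.2} := by
  set S := {p : C(OnePoint ℂ, M) × C(OnePoint ℂ, M) |
    ∃ a ha, ‖a‖ ≤ 1 ∧ p.2 = p.1.comp (gA a ha)}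
  have hS : closure S ⊆ {p | reparamSetoid M p.1 p.2} := by
    intro p hp
    obtain ⟨P, hPS, hP⟩ := mem_closure_iff_seq_limit.1 hp
    choose a ha ha1 hFH using hPS
    exact reparamSetoid_of_tendsto_of_norm_le_one ((continuous_fst.tendsto p).comp hP)
      ((continuous_snd.tendsto p).comp hP) hFH ha1
  have hsub : {p | reparamSetoid M p.1 p.2} ⊆ S ∪ Prod.swap ⁻¹' S := by
    rintro p ⟨a, ha, hp⟩
    rcases le_total ‖a‖ 1 with ha1 | ha1
    · exact Or.inl ⟨a, ha, ha1, hp⟩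
    · refine Or.inr ⟨a⁻¹, inv_ne_zero ha, by simpa using inv_le_one_of_one_le₀ ha1, ?_⟩
      simp [hp, ContinuousMap.comp_assoc, gA_comp_gA_inv]
  refine closure_subset_iff_isClosed.1 ((closure_mono hsub).trans ?_)
  rw [closure_union, ← Homeomorph.coe_prodComm, ← Homeomorph.preimage_closure]
  exact union_subset hS fun p hp => (reparamSetoid M).symm (hS hp)

lemma isOpenQuotientMap_quotientMk_reparamSetoid :
    IsOpenQuotientMap (Quotient.mk (reparamSetoid M)) := by
  refine ⟨Quot.mk_surjective, continuous_quot_mk, fun U hU => ?_⟩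
  have hsat : Quotient.mk (reparamSetoid M) ⁻¹' (Quotient.mk (reparamSetoid M) '' U) =
      ⋃ a : {a : ℂ // a ≠ 0}, (fun F : C(OnePoint ℂ, M) => F.comp (gA a.1 a.2)) ⁻¹' U := by
    ext f
    simp only [mem_preimage, mem_image, mem_iUnion, Quotient.eq]
    constructor
    · rintro ⟨u, hu, huf⟩
      obtain ⟨a, ha, rfl⟩ := (reparamSetoid M).symm huf
      exact ⟨⟨a, ha⟩, hu⟩
    · rintro ⟨a, hfa⟩
      exact ⟨_, hfa, (reparamSetoid M).symm ⟨a.1, a.2, rfl⟩⟩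
  rw [isOpen_coinduced]
  exact hsat ▸ isOpen_iUnion fun a => hU.preimage (ContinuousMap.continuous_precomp _)

end Quotient

/-- The quotient of `C(Σ, M)` by the `ℂ*`-reparametrization action, with the quotient
topology, is Hausdorff: the space of unparametrized continuous maps is Hausdorff. -/
theorem unparametrized_maps_Hausdorff (M : Type*) [MetricSpace M] [CompactSpace M] :
    T2Space (Quotient (reparamSetoid M)) := by
  rw [t2Space_iff_of_isOpenQuotientMap isOpenQuotientMap_quotientMk_reparamSetoid]
  simpa only [Quotient.eq] using isClosed_reparamSetoid_rel
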